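/- arXiv:2405.16658 — 6 statements merged into one kernel-verified Lean document; each statement's English description precedes it below -/
import Mathlib

section
/- For every integer n ≥ 2 and every continuous function f : [0,1]^n → ℝ, there exist real constants λ₁, …, λₙ, a continuous function φ : [0,1] → ℝ^(2n+1), and a continuous function ψ : ℝ^(2n+1) → ℝ such that f(x₁, …, xₙ) = ψ(∑_{i=1}^n λᵢ · φ(xᵢ)) for all (x₁, …, xₙ) ∈ [0,1]^n. -/
open Finset in

/-- Sums of distinct powers of two determine the set of exponents. -/
lemma KA.two_pow_sum_inj (A B : Finset ℕ)
    (h : ∑ i ∈ A, (2:ℕ)^i = ∑ i ∈ B, (2:ℕ)^i) : A = B := by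
  have key : ∀ C : Finset ℕ, (∑ i ∈ C, (2:ℕ)^i).bitIndices = C.sort (· ≤ ·) := by
    intro C
    have h1 : ∑ i ∈ C, (2:ℕ)^i = ((C.sort (· ≤ ·)).map (fun i => 2^i)).sum := by
      rw [← Finset.sum_map_toList]
      exact (List.Perm.sum_eq ((Finset.sort_perm_toList _ _).map _)).symm
    rw [h1, Nat.bitIndices_twoPowsum (Finset.sortedLT_sort C)]
  have h2 := congrArg Nat.bitIndices h
  rw [key A, key B] at h2
  have h3 := congrArg List.toFinset h2
  simpa [Finset.sort_toFinset] using h3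

/-- A weight function supported on few points whose moments vanish is zero. -/
lemma KA.moments_zero (N : ℕ) (S : Finset ℝ) (w : ℝ → ℝ)
    (hcard : S.card ≤ N + 1)
    (h : ∀ k ≤ N, ∑ p ∈ S, w p * p ^ k = 0) :
    ∀ p ∈ S, w p = 0 := by
  intro p hp
  have hinj : Set.InjOn (id : ℝ → ℝ) S := Function.injective_id.injOn
  set L := Lagrange.basis S id p with hL
  have hdeg : L.natDegree < N + 1 := by
    rw [hL, Lagrange.natDegree_basis hinj hp]; omega
  have heval : ∀ q ∈ S, L.eval q = if q = p then 1 else 0 := by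
    intro q hq
    by_cases hqp : q = p
    · subst hqp
      simpa using Lagrange.eval_basis_self hinj hp
    · simpa [hqp] using Lagrange.eval_basis_of_ne (v := id) (Ne.symm hqp) hq
  have hsum : ∑ q ∈ S, w q * L.eval q = 0 := by
    have step : ∀ q ∈ S, w q * L.eval q
        = ∑ k ∈ Finset.range (N+1), L.coeff k * (w q * q ^ k) := by
      intro q hq
      rw [Polynomial.eval_eq_sum_range' hdeg q, Finset.mul_sum]
      refine Finset.sum_congr rfl fun k _ => by ring
    rw [Finset.sum_congr rfl step, Finset.sum_comm]
    refine Finset.sum_eq_zero fun k hk => ?_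
    rw [← Finset.mul_sum, h k (by simpa using Nat.lt_succ_iff.mp (Finset.mem_range.mp hk)),
      mul_zero]
  rw [Finset.sum_congr rfl fun q hq => by rw [heval q hq]] at hsum
  simpa [Finset.sum_ite_eq' S p w, hp] using hsum

/-- **Kolmogorov–Arnold representation theorem** (vector-valued form):
for every `n ≥ 2` and every continuous `f : [0,1]^n → ℝ`, there exist constants
`λ₁, …, λₙ`, a continuous `φ : [0,1] → ℝ^(2n+1)` and a continuous
`ψ : ℝ^(2n+1) → ℝ` with `f x = ψ (∑ i, λᵢ • φ (x i))`. -/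
theorem kolmogorov_arnold_representation (n : ℕ) (hn : 2 ≤ n)
    (f : (Fin n → Set.Icc (0 : ℝ) 1) → ℝ) (hf : Continuous f) :
    ∃ (lam : Fin n → ℝ) (φ : Set.Icc (0 : ℝ) 1 → (Fin (2 * n + 1) → ℝ))
      (ψ : (Fin (2 * n + 1) → ℝ) → ℝ), Continuous φ ∧ Continuous ψ ∧
      ∀ x : Fin n → Set.Icc (0 : ℝ) 1, f x = ψ (∑ i : Fin n, lam i • φ (x i)) := by
  classical
  set lam : Fin n → ℝ := fun i => 2 ^ (i : ℕ) with hlam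
  set φ : Set.Icc (0:ℝ) 1 → Fin (2*n+1) → ℝ := fun t j => (t : ℝ) ^ (j : ℕ) with hφdef
  set F : (Fin n → Set.Icc (0:ℝ) 1) → Fin (2*n+1) → ℝ :=
    fun x => ∑ i, lam i • φ (x i) with hFdef
  have hφ : Continuous φ := continuous_pi fun j => continuous_subtype_val.pow _
  have hF : Continuous F :=
    continuous_finset_sum _ fun i _ => ((hφ.comp (continuous_apply i)).const_smul (lam i))
  have hFx : ∀ x j, F x j = ∑ i : Fin n, (2:ℝ)^(i:ℕ) * ((x i : ℝ))^(j:ℕ) := by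
    intro x j
    simp only [hFdef, Finset.sum_apply, Pi.smul_apply, smul_eq_mul, hlam, hφdef]
  -- injectivity of F
  have hinj : Function.Injective F := by
    intro x y hxy
    set S : Finset ℝ :=
      (Finset.univ.image fun i => ((x i : ℝ))) ∪ (Finset.univ.image fun i => ((y i : ℝ)))
      with hS
    have hcard : S.card ≤ 2 * n + 1 := by
      calc S.card ≤ (Finset.univ.image fun i => ((x i : ℝ))).card
            + (Finset.univ.image fun i => ((y i : ℝ))).card := Finset.card_union_le _ _
        _ ≤ n + n := add_le_add (Finset.card_image_le.trans (by simp))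
            (Finset.card_image_le.trans (by simp))
        _ ≤ 2 * n + 1 := by omega
    set w : ℝ → ℝ := fun p =>
      (∑ i ∈ Finset.univ.filter (fun i : Fin n => ((x i : ℝ)) = p), (2:ℝ)^(i:ℕ))
      - (∑ i ∈ Finset.univ.filter (fun i : Fin n => ((y i : ℝ)) = p), (2:ℝ)^(i:ℕ)) with hw
    have hm : ∀ k ≤ 2 * n, ∑ p ∈ S, w p * p ^ k = 0 := by
      intro k hk
      have hxs : ∑ p ∈ S, (∑ i ∈ Finset.univ.filter (fun i : Fin n => ((x i : ℝ)) = p),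
          (2:ℝ)^(i:ℕ)) * p ^ k = ∑ i : Fin n, (2:ℝ)^(i:ℕ) * ((x i : ℝ))^k := by
        rw [← Finset.sum_fiberwise_of_maps_to (g := fun i : Fin n => ((x i : ℝ))) (t := S)
          (fun i _ => by simp [hS]) (fun i => (2:ℝ)^(i:ℕ) * ((x i : ℝ))^k)]
        refine Finset.sum_congr rfl fun p hp => ?_
        rw [Finset.sum_mul]
        refine Finset.sum_congr rfl fun i hi => ?_
        have : ((x i : ℝ)) = p := (Finset.mem_filter.mp hi).2
        rw [this]
      have hys : ∑ p ∈ S, (∑ i ∈ Finset.univ.filter (fun i : Fin n => ((y i : ℝ)) = p),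
          (2:ℝ)^(i:ℕ)) * p ^ k = ∑ i : Fin n, (2:ℝ)^(i:ℕ) * ((y i : ℝ))^k := by
        rw [← Finset.sum_fiberwise_of_maps_to (g := fun i : Fin n => ((y i : ℝ))) (t := S)
          (fun i _ => by simp [hS]) (fun i => (2:ℝ)^(i:ℕ) * ((y i : ℝ))^k)]
        refine Finset.sum_congr rfl fun p hp => ?_
        rw [Finset.sum_mul]
        refine Finset.sum_congr rfl fun i hi => ?_
        have : ((y i : ℝ)) = p := (Finset.mem_filter.mp hi).2
        rw [this]
      have hk' : k < 2 * n + 1 := by omega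
      have hFeq : F x ⟨k, hk'⟩ = F y ⟨k, hk'⟩ := by rw [hxy]
      rw [hFx, hFx] at hFeq
      simp only [hw, sub_mul, Finset.sum_sub_distrib, hxs, hys]
      simpa using sub_eq_zero_of_eq hFeq
    have hwz := KA.moments_zero (2 * n) S w hcard hm
    funext i
    have hpx : ((x i : ℝ)) ∈ S := by simp [hS]
    have h0 := hwz _ hpx
    rw [hw] at h0
    have hsums : (∑ j ∈ Finset.univ.filter (fun j : Fin n => ((x j : ℝ)) = (x i : ℝ)),
        (2:ℝ)^(j:ℕ)) = ∑ j ∈ Finset.univ.filter (fun j : Fin n => ((y j : ℝ)) = (x i : ℝ)),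
        (2:ℝ)^(j:ℕ) := by linarith [sub_eq_zero.mp h0]
    set A : Finset ℕ := (Finset.univ.filter (fun j : Fin n => ((x j : ℝ)) = (x i : ℝ))).image
      Fin.val with hA
    set B : Finset ℕ := (Finset.univ.filter (fun j : Fin n => ((y j : ℝ)) = (x i : ℝ))).image
      Fin.val with hB
    have hAs : (∑ a ∈ A, (2:ℕ)^a : ℝ) = ∑ j ∈ Finset.univ.filter
        (fun j : Fin n => ((x j : ℝ)) = (x i : ℝ)), (2:ℝ)^(j:ℕ) := by
      rw [hA, Finset.sum_image (fun a _ b _ h => Fin.val_injective h)]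
      push_cast; rfl
    have hBs : (∑ a ∈ B, (2:ℕ)^a : ℝ) = ∑ j ∈ Finset.univ.filter
        (fun j : Fin n => ((y j : ℝ)) = (x i : ℝ)), (2:ℝ)^(j:ℕ) := by
      rw [hB, Finset.sum_image (fun a _ b _ h => Fin.val_injective h)]
      push_cast; rfl
    have hnat : (∑ a ∈ A, (2:ℕ)^a) = ∑ a ∈ B, (2:ℕ)^a := by
      have : ((∑ a ∈ A, (2:ℕ)^a : ℕ) : ℝ) = ((∑ a ∈ B, (2:ℕ)^a : ℕ) : ℝ) := by
        push_cast at hAs hBs ⊢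
        rw [hAs, hBs, hsums]
      exact_mod_cast this
    have hAB : A = B := KA.two_pow_sum_inj A B hnat
    have hiA : (i : ℕ) ∈ A := by simp [hA]; exact ⟨i, rfl, rfl⟩
    rw [hAB, hB] at hiA
    obtain ⟨j, hj, hji⟩ := Finset.mem_image.mp hiA
    have : j = i := Fin.val_injective hji
    subst this
    exact Subtype.ext ((Finset.mem_filter.mp hj).2).symm
  -- homeomorphism onto range, Tietze extension
  have hcont' : Continuous (fun x => (⟨F x, Set.mem_range_self x⟩ : Set.range F)) :=
    hF.subtype_mk _
  let e : (Fin n → Set.Icc (0:ℝ) 1) ≃ₜ Set.range F :=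
    Continuous.homeoOfEquivCompactToT2 (f := Equiv.ofInjective F hinj) hcont'
  have hclosed : IsClosed (Set.range F) := (isCompact_range hF).isClosed
  let g : C(Set.range F, ℝ) := ⟨f ∘ e.symm, hf.comp e.symm.continuous⟩
  obtain ⟨ψ, hψ⟩ := g.exists_restrict_eq hclosed
  refine ⟨lam, φ, ψ, hφ, ψ.continuous, fun x => ?_⟩
  have h1 : ψ (F x) = g ⟨F x, Set.mem_range_self x⟩ := by
    have := congrFun (congrArg DFunLike.coe hψ) ⟨F x, Set.mem_range_self x⟩
    simpa [ContinuousMap.restrict] using this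
  have h2 : e.symm ⟨F x, Set.mem_range_self x⟩ = x := by
    have : e x = ⟨F x, Set.mem_range_self x⟩ := rfl
    rw [← this, Homeomorph.symm_apply_apply]
  show f x = ψ (F x)
  rw [h1]
  show f x = f (e.symm ⟨F x, Set.mem_range_self x⟩)
  rw [h2]
end

section
/- For every integer n ≥ 1 and every continuous function f : [0,1]^n → ℝ that is permutation-invariant (i.e., f(x₁, …, xₙ) = f(x_{σ(1)}, …, x_{σ(n)}) for every permutation σ of {1, …, n}), there exist a continuous function φ : [0,1] → ℝ^(n+1) and a continuous function ψ : ℝ^(n+1) → ℝ such that f(x₁, …, xₙ) = ψ(∑_{i=1}^n φ(xᵢ)) for all (x₁, …, xₙ) ∈ [0,1]^n. -/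
open Finset List Polynomial Topology


private lemma deepsets_esymm_eq_of_psum {n : ℕ} (x y : Fin n → ℝ)
    (h : ∀ k, 0 < k → k ≤ n → ∑ i, x i ^ k = ∑ i, y i ^ k) :
    ∀ k, k ≤ n → (Finset.univ.val.map x).esymm k = (Finset.univ.val.map y).esymm k := by
  intro k
  induction k using Nat.strong_induction_on with
  | _ k ih =>
    intro hkn
    rcases Nat.eq_zero_or_pos k with rfl | hk
    · simp [Multiset.esymm]
    have hNx := congrArg (MvPolynomial.aeval x) (MvPolynomial.mul_esymm_eq_sum (Fin n) ℝ k)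
    have hNy := congrArg (MvPolynomial.aeval y) (MvPolynomial.mul_esymm_eq_sum (Fin n) ℝ k)
    simp only [map_mul, map_natCast, map_pow, map_neg, map_one, map_sum,
      MvPolynomial.aeval_esymm_eq_multiset_esymm, MvPolynomial.psum, MvPolynomial.aeval_X]
      at hNx hNy
    have hsum : ∑ a ∈ Finset.HasAntidiagonal.antidiagonal k with a.1 < k,
          (-1 : ℝ) ^ a.1 * (Finset.univ.val.map x).esymm a.1 * ∑ i, x i ^ a.2
        = ∑ a ∈ Finset.HasAntidiagonal.antidiagonal k with a.1 < k,
          (-1 : ℝ) ^ a.1 * (Finset.univ.val.map y).esymm a.1 * ∑ i, y i ^ a.2 := by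
      refine Finset.sum_congr rfl fun a ha => ?_
      simp only [Finset.mem_filter, Finset.HasAntidiagonal.mem_antidiagonal] at ha
      rw [ih a.1 ha.2 (by omega), h a.2 (by omega) (by omega)]
    have hkR : (k : ℝ) ≠ 0 := Nat.cast_ne_zero.mpr (by omega)
    exact mul_left_cancel₀ hkR (hNx.trans (hsum ▸ hNy.symm))

private lemma deepsets_multiset_eq_of_psum {n : ℕ} (x y : Fin n → ℝ)
    (h : ∀ k, 0 < k → k ≤ n → ∑ i, x i ^ k = ∑ i, y i ^ k) :
    Multiset.map x Finset.univ.val = Multiset.map y Finset.univ.val := by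
  have hcard : ∀ z : Fin n → ℝ, Multiset.card (Multiset.map z Finset.univ.val) = n := by
    intro z; simp
  have he := deepsets_esymm_eq_of_psum x y h
  have hprod : ((Multiset.map x Finset.univ.val).map fun t => X - C t).prod
      = ((Multiset.map y Finset.univ.val).map fun t => X - C t).prod := by
    rw [Multiset.prod_X_sub_X_eq_sum_esymm, Multiset.prod_X_sub_X_eq_sum_esymm, hcard, hcard]
    refine Finset.sum_congr rfl fun j hj => ?_
    rw [he j (by simpa using Nat.lt_succ_iff.mp (Finset.mem_range.mp hj))]
  have := congrArg Polynomial.roots hprod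
  rwa [roots_multiset_prod_X_sub_C, roots_multiset_prod_X_sub_C] at this

private lemma deepsets_exists_perm {n : ℕ} {α : Type*} [LinearOrder α] (x y : Fin n → α)
    (h : Multiset.map x Finset.univ.val = Multiset.map y Finset.univ.val) :
    ∃ σ : Equiv.Perm (Fin n), x = y ∘ σ := by
  have hco : ∀ z : Fin n → α, (↑(List.ofFn z) : Multiset α) = Multiset.map z Finset.univ.val := by
    intro z; simp [List.ofFn_eq_map, Fin.univ_def]
  have hperm : List.ofFn x ~ List.ofFn y := by
    rw [← Multiset.coe_eq_coe, hco, hco]; exact h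
  have h1 : List.ofFn (x ∘ Tuple.sort x) ~ List.ofFn (y ∘ Tuple.sort y) :=
    ((Equiv.Perm.ofFn_comp_perm _ x).trans hperm).trans
      (Equiv.Perm.ofFn_comp_perm _ y).symm
  have heq : x ∘ Tuple.sort x = y ∘ Tuple.sort y :=
    List.ofFn_injective <| List.Perm.eq_of_sortedLE
      (Tuple.monotone_sort x).sortedLE_ofFn (Tuple.monotone_sort y).sortedLE_ofFn h1
  refine ⟨(Tuple.sort x).symm.trans (Tuple.sort y), funext fun a => ?_⟩
  simpa using congrFun heq ((Tuple.sort x).symm a)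

/-- **Permutation-invariant representation** (Deep Sets / Zaheer et al.):
every permutation-invariant continuous `f : [0,1]^n → ℝ` (with `n ≥ 1`) admits a
representation `f x = ψ (∑ i, φ (x i))` with continuous `φ : [0,1] → ℝ^(n+1)`
and continuous `ψ : ℝ^(n+1) → ℝ`. -/
theorem permutation_invariant_representation (n : ℕ) (hn : 1 ≤ n)
    (f : (Fin n → Set.Icc (0 : ℝ) 1) → ℝ) (hf : Continuous f)
    (hsym : ∀ (σ : Equiv.Perm (Fin n)) (x : Fin n → Set.Icc (0 : ℝ) 1),
      f x = f (x ∘ σ)) :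
    ∃ (φ : Set.Icc (0 : ℝ) 1 → (Fin (n + 1) → ℝ)) (ψ : (Fin (n + 1) → ℝ) → ℝ),
      Continuous φ ∧ Continuous ψ ∧
      ∀ x : Fin n → Set.Icc (0 : ℝ) 1, f x = ψ (∑ i : Fin n, φ (x i)) := by
  classical
  set φ : Set.Icc (0:ℝ) 1 → Fin (n+1) → ℝ := fun t k => (t : ℝ) ^ (k : ℕ) with hφ
  have hφc : Continuous φ := continuous_pi fun k => continuous_subtype_val.pow _
  set P : (Fin n → Set.Icc (0:ℝ) 1) → (Fin (n+1) → ℝ) := fun x => ∑ i, φ (x i) with hPdef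
  have hPc : Continuous P :=
    continuous_finset_sum _ fun i _ => hφc.comp (continuous_apply i)
  -- key: equal images under P give equal values of f
  have key : ∀ x y, P x = P y → f x = f y := by
    intro x y hxy
    have hps : ∀ k, 0 < k → k ≤ n →
        ∑ i, ((x i : ℝ)) ^ k = ∑ i, ((y i : ℝ)) ^ k := by
      intro k hk hkn
      have := congrFun hxy ⟨k, by omega⟩
      simpa [P, φ, Finset.sum_apply] using this
    have hm := deepsets_multiset_eq_of_psum (fun i => (x i : ℝ)) (fun i => (y i : ℝ)) hps
    have hm' : Multiset.map x Finset.univ.val = Multiset.map y Finset.univ.val := by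
      apply Multiset.map_injective (Subtype.val_injective)
      simpa [Multiset.map_map, Function.comp_def] using hm
    obtain ⟨σ, hσ⟩ := deepsets_exists_perm x y hm'
    rw [hσ]; exact (hsym σ y).symm
  -- quotient map onto the range of P
  set S : Set (Fin (n+1) → ℝ) := Set.range P with hS
  have hScpt : IsCompact S := isCompact_range hPc
  set q : (Fin n → Set.Icc (0:ℝ) 1) → S := fun x => ⟨P x, Set.mem_range_self x⟩ with hq
  have hqc : Continuous q := hPc.subtype_mk _
  have hqsurj : Function.Surjective q := by
    rintro ⟨-, x, rfl⟩; exact ⟨x, rfl⟩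
  have hquot : IsQuotientMap q := (hqc.isClosedMap).isQuotientMap hqc hqsurj
  set g : S → ℝ := fun s => f s.2.choose with hg
  have hgq : ∀ x, g (q x) = f x := fun x => key _ _ (q x).2.choose_spec
  have hgc : Continuous g := by
    rw [hquot.continuous_iff]
    have : (g ∘ q) = f := funext hgq
    rw [this]; exact hf
  obtain ⟨ψ, hψ⟩ := ContinuousMap.exists_restrict_eq (hScpt.isClosed) ⟨g, hgc⟩
  refine ⟨φ, ψ, hφc, ψ.continuous, fun x => ?_⟩
  have h1 : (ψ.restrict S) ⟨P x, Set.mem_range_self x⟩ = g ⟨P x, Set.mem_range_self x⟩ := by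
    rw [hψ]; rfl
  have h2 : ψ (P x) = f x := by
    rw [show (ψ.restrict S) ⟨P x, Set.mem_range_self x⟩ = ψ (P x) from rfl] at h1
    rw [h1]; exact hgq x
  simpa [P] using h2.symm
end

section
/- Let G ⊆ ℝ be a finite nonempty set and let ∘ : G × G → G be a commutative binary operation on G (i.e., x₁ ∘ x₂ = x₂ ∘ x₁ for all x₁, x₂ ∈ G). Then there exist functions φ : G → ℝ³ and ψ : ℝ³ → G such that x₁ ∘ x₂ = ψ(φ(x₁) + φ(x₂)) for all x₁, x₂ ∈ G. -/
/-!
The vector `(x₁ + x₂, x₁² + x₂²)` determines the unordered pair `{x₁, x₂}`: if `(a, b)` and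
`(c, d)` have the same sum and the same sum of squares then `2 (a - c) (a - d) = 0`. Hence
`φ x = (x, x², 0)` makes `φ x₁ + φ x₂` an injective function of `{x₁, x₂}`, and a commutative
operation, being a function of that unordered pair, factors through it.
-/

open Function

namespace Sym2

variable {α β M : Type*}

def pairSum [AddCommMagma M] (f : α → M) : Sym2 α → M :=
  lift ⟨fun a b => f a + f b, fun _ _ => add_comm _ _⟩

@[simp]
theorem pairSum_mk [AddCommMagma M] (f : α → M) (a b : α) : pairSum f s(a, b) = f a + f b :=
  rfl

theorem injective_pairSum_comp [AddCommMagma M] {f : β → M} {g : α → β}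
    (hf : Injective (pairSum f)) (hg : Injective g) : Injective (pairSum (f ∘ g)) := by
  have hcomp : pairSum (f ∘ g) = pairSum f ∘ map g := by
    ext z
    induction z using Sym2.ind
    rfl
  rw [hcomp]
  exact hf.comp (map.injective hg)

theorem mk_eq_mk_of_add_eq_of_sq_add_sq_eq {R : Type*} [CommRing R] [IsDomain R]
    [NeZero (2 : R)] {a b c d : R} (h₁ : a + b = c + d) (h₂ : a ^ 2 + b ^ 2 = c ^ 2 + d ^ 2) :
    s(a, b) = s(c, d) := by
  have key : 2 * ((a - c) * (a - d)) = 0 := by linear_combination h₂ - (b + c + d - a) * h₁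
  rw [Sym2.eq_iff]
  rcases mul_eq_zero.mp ((mul_eq_zero.mp key).resolve_left two_ne_zero) with h | h
  · exact Or.inl ⟨by linear_combination h, by linear_combination h₁ - h⟩
  · exact Or.inr ⟨by linear_combination h, by linear_combination h₁ - h⟩

end Sym2

open Sym2

theorem injective_pairSum_moments {R : Type*} [CommRing R] [IsDomain R] [NeZero (2 : R)] :
    Injective (pairSum fun x : R => ![x, x ^ 2, 0]) := by
  intro z w h
  induction z using Sym2.ind
  induction w using Sym2.ind
  exact mk_eq_mk_of_add_eq_of_sq_add_sq_eq (by simpa using congrFun h 0)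
    (by simpa using congrFun h 1)

theorem exists_eq_comp_add_of_injective_pairSum {α γ M : Type*} [AddCommMagma M] [Nonempty γ]
    {f : α → M} (hf : Injective (pairSum f)) (op : α → α → γ)
    (hcomm : ∀ a b, op a b = op b a) : ∃ ψ : M → γ, ∀ a b, op a b = ψ (f a + f b) :=
  ⟨extend (pairSum f) (lift ⟨op, hcomm⟩) fun _ => Classical.arbitrary γ, fun a b => by
    rw [← pairSum_mk, hf.extend_apply, lift_mk]⟩

theorem ka_representation_commutative_binary_op_general (G : Set ℝ)
    (hne : G.Nonempty) (op : G → G → G)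
    (hcomm : ∀ x₁ x₂ : G, op x₁ x₂ = op x₂ x₁) :
    ∃ (φ : G → (Fin 3 → ℝ)) (ψ : (Fin 3 → ℝ) → G),
      ∀ x₁ x₂ : G, op x₁ x₂ = ψ (φ x₁ + φ x₂) := by
  have : Nonempty G := hne.to_subtype
  exact ⟨_, exists_eq_comp_add_of_injective_pairSum
    (injective_pairSum_comp injective_pairSum_moments Subtype.val_injective) op hcomm⟩

/-- Every commutative binary operation on a finite nonempty set `G ⊆ ℝ` admits a
Kolmogorov–Arnold representation with embedding dimension `3`:
`x₁ ∘ x₂ = ψ (φ x₁ + φ x₂)`. -/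
theorem ka_representation_commutative_binary_op (G : Set ℝ) (hG : G.Finite)
    (hne : G.Nonempty) (op : G → G → G)
    (hcomm : ∀ x₁ x₂ : G, op x₁ x₂ = op x₂ x₁) :
    ∃ (φ : G → (Fin 3 → ℝ)) (ψ : (Fin 3 → ℝ) → G),
      ∀ x₁ x₂ : G, op x₁ x₂ = ψ (φ x₁ + φ x₂) :=
  ka_representation_commutative_binary_op_general G hne op hcomm
end

section
/- Let G be a finite cyclic group (written multiplicatively). Then there exist a function ρ : G → ℂ \ {0} and a function ψ : ℂ → G such that for every n ≥ 1 and all x₁, …, xₙ ∈ G, one has ψ(∑_{i=1}^n log(ρ(xᵢ))) = x₁ · x₂ · ⋯ · xₙ, where log denotes the principal branch of the complex logarithm. In particular, the same pair (ρ, ψ) works simultaneously for all arities n. -/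
open Complex Real

/-- **KA representation for finite cyclic groups**: for a finite cyclic group `G`
there exist `ρ : G → ℂ \ {0}` and `ψ : ℂ → G` such that
`ψ (∑ i, log (ρ (x i))) = x₁ ⋯ xₙ` simultaneously for every arity `n ≥ 1`,
where `log` is the principal branch of the complex logarithm. -/
theorem ka_representation_finite_cyclic_group (G : Type*) [CommGroup G] [Fintype G]
    [IsCyclic G] :
    ∃ (ρ : G → ℂ) (ψ : ℂ → G),
      (∀ x : G, ρ x ≠ 0) ∧
      ∀ n : ℕ, 1 ≤ n → ∀ x : Fin n → G,
        ψ (∑ i : Fin n, Complex.log (ρ (x i))) = ∏ i : Fin n, x i := by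
  classical
  set m : ℕ := Nat.card G with hm
  have hm0 : 0 < m := Nat.card_pos
  haveI : NeZero m := ⟨hm0.ne'⟩
  let e : G ≃* Multiplicative (ZMod m) :=
    (zmodCyclicMulEquiv (by infer_instance : IsCyclic G)).symm
  -- index of x in {0, ..., m-1}
  let v : G → ℕ := fun x => (Multiplicative.toAdd (e x)).val
  let θ : G → ℝ := fun x => (v x : ℝ) / m
  let ρ : G → ℂ := fun x => Complex.exp (((2 * π * θ x : ℝ) : ℂ) * Complex.I)
  have hρ : ∀ x, ρ x ≠ 0 := fun x => Complex.exp_ne_zero _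
  -- log (ρ x) has imaginary part 2π(θ x + k x) for some integer k x
  have hlog : ∀ x : G, ∃ k : ℤ, (Complex.log (ρ x)).im = 2 * π * θ x + 2 * π * k := by
    intro x
    have h1 : Complex.exp (Complex.log (ρ x)) = Complex.exp (((2 * π * θ x : ℝ) : ℂ) * Complex.I) :=
      Complex.exp_log (hρ x)
    obtain ⟨k, hk⟩ := Complex.exp_eq_exp_iff_exists_int.mp h1
    refine ⟨k, ?_⟩
    rw [hk]
    simp
    ring
  choose k hk using hlog
  let ψ : ℂ → G := fun z =>
    e.symm (Multiplicative.ofAdd ((round (m * z.im / (2 * π)) : ℤ) : ZMod m))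
  refine ⟨ρ, ψ, hρ, ?_⟩
  intro n _ x
  have hπ : (2 * π) ≠ 0 := by positivity
  -- compute the imaginary part of the sum
  have him : (∑ i : Fin n, Complex.log (ρ (x i))).im
      = 2 * π * ((∑ i : Fin n, ((v (x i) : ℝ) + m * (k (x i) : ℝ))) / m) := by
    rw [Complex.im_sum]
    rw [Finset.sum_div, Finset.mul_sum]
    refine Finset.sum_congr rfl fun i _ => ?_
    rw [hk]
    have hmne : (m : ℝ) ≠ 0 := Nat.cast_ne_zero.mpr hm0.ne'
    simp only [θ]
    field_simp [θ]
  have key : (m : ℝ) * (∑ i : Fin n, Complex.log (ρ (x i))).im / (2 * π)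
      = ((∑ i : Fin n, ((v (x i) : ℤ) + m * k (x i)) : ℤ) : ℝ) := by
    rw [him]
    have hmne : (m : ℝ) ≠ 0 := Nat.cast_ne_zero.mpr hm0.ne'
    push_cast
    field_simp
  show e.symm (Multiplicative.ofAdd
      ((round ((m : ℝ) * (∑ i : Fin n, Complex.log (ρ (x i))).im / (2 * π)) : ℤ) : ZMod m))
    = ∏ i : Fin n, x i
  rw [key, round_intCast]
  have hcast : (((∑ i : Fin n, ((v (x i) : ℤ) + m * k (x i)) : ℤ) : ZMod m))
      = Multiplicative.toAdd (e (∏ i : Fin n, x i)) := by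
    push_cast
    simp only [ZMod.natCast_self, zero_mul, add_zero]
    have : ∀ i : Fin n, ((v (x i) : ZMod m)) = Multiplicative.toAdd (e (x i)) := by
      intro i
      simp [v, ZMod.natCast_val, ZMod.cast_id]
    rw [Finset.sum_congr rfl fun i _ => this i]
    rw [map_prod]
    rw [← toAdd_prod]
  rw [hcast]
  simp
end

section
/- Let p be a prime number and let (ℤ/pℤ)ˣ denote the multiplicative group of nonzero residues modulo p. Then there exist a function ρ : (ℤ/pℤ)ˣ → ℂ \ {0} and a function ψ : ℂ → (ℤ/pℤ)ˣ such that for every n ≥ 1 and all x₁, …, xₙ ∈ (ℤ/pℤ)ˣ, ψ(∑_{i=1}^n log(ρ(xᵢ))) = x₁ · x₂ · ⋯ · xₙ (the product taken modulo p), where log denotes the principal branch of the complex logarithm. -/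
/-!
Fix a generator `g` of the cyclic group `(ℤ/pℤ)ˣ` and write every `x` as `g ^ k x` with
`k x : ℕ`. Encoding `x` as `ρ x = exp (k x)` makes the principal logarithm return the exponent
`k x` exactly, so `∑ log (ρ (xᵢ))` is the natural number `∑ k xᵢ`; decoding `z` as
`g ^ ⌊re z⌋₊` turns this sum back into `∏ g ^ k xᵢ = ∏ xᵢ`, whatever the arity.
-/

open Complex

theorem Complex.log_exp_natCast (n : ℕ) : log (exp n) = n := by
  rw [← ofReal_natCast, ← ofReal_exp, ← ofReal_log (Real.exp_pos _).le, Real.log_exp]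

theorem exists_log_sum_representation_of_forall_mem_powers {M : Type*} [CommMonoid M] {g : M}
    (hg : ∀ x, x ∈ Submonoid.powers g) :
    ∃ (ρ : M → ℂ) (ψ : ℂ → M), (∀ x, ρ x ≠ 0) ∧
      ∀ {ι : Type*} [Fintype ι] (x : ι → M), ψ (∑ i, log (ρ (x i))) = ∏ i, x i := by
  choose k hk using fun x => (Submonoid.mem_powers_iff x g).1 (hg x)
  refine ⟨fun x => exp (k x), fun z => g ^ ⌊z.re⌋₊, fun x => exp_ne_zero _, fun x => ?_⟩
  have hsum : ∑ i, log (exp (k (x i))) = ((∑ i, k (x i) : ℕ) : ℂ) := by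
    simp only [log_exp_natCast, Nat.cast_sum]
  simp only [hsum, natCast_re, Nat.floor_natCast, ← Finset.prod_pow_eq_pow_sum, hk]

/-- **KA representation of modular multiplication**: for a prime `p` there exist
`ρ : (ℤ/pℤ)ˣ → ℂ \ {0}` and `ψ : ℂ → (ℤ/pℤ)ˣ` such that
`ψ (∑ i, log (ρ (x i))) = x₁ ⋯ xₙ` for every arity `n ≥ 1`, where `log` is the
principal branch of the complex logarithm. -/
theorem ka_representation_modular_multiplication (p : ℕ) (hp : p.Prime) :
    ∃ (ρ : (ZMod p)ˣ → ℂ) (ψ : ℂ → (ZMod p)ˣ),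
      (∀ x : (ZMod p)ˣ, ρ x ≠ 0) ∧
      ∀ n : ℕ, 1 ≤ n → ∀ x : Fin n → (ZMod p)ˣ,
        ψ (∑ i : Fin n, Complex.log (ρ (x i))) = ∏ i : Fin n, x i := by
  have : Fact p.Prime := ⟨hp⟩
  obtain ⟨g, hg⟩ := IsCyclic.exists_generator (α := (ZMod p)ˣ)
  have hpowers : ∀ x, x ∈ Submonoid.powers g := fun x => mem_powers_iff_mem_zpowers.2 (hg x)
  obtain ⟨ρ, ψ, hρ, hψ⟩ := exists_log_sum_representation_of_forall_mem_powers hpowers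
  exact ⟨ρ, ψ, hρ, fun _ _ x => hψ x⟩
end

section
/- Let p be a prime number and let (ℤ/pℤ)ˣ denote the multiplicative group of nonzero residues modulo p. Then there exist a function ρ : (ℤ/pℤ)ˣ → ℂ \ {0} and a function ψ : ℂ → (ℤ/pℤ)ˣ such that for all x₁, x₂ ∈ (ℤ/pℤ)ˣ, both ψ(log(ρ(x₁)) + log(ρ(x₂))) = x₁ · x₂ and ψ(log(ρ(x₁)) − log(ρ(x₂))) = x₁ · x₂⁻¹ hold, where log denotes the principal branch of the complex logarithm and multiplication and inversion are taken modulo p. -/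
/-! Since `p` is prime, `(ℤ/pℤ)ˣ` is cyclic: choose a generator `g` and a discrete logarithm `k`
with `g ^ k x = x`, and put `ρ x = exp (k x)`. As `k x` is an integer, hence real, the principal
logarithm recovers it exactly, so sums and differences of embeddings are the integers `k x₁ ± k x₂`, and
`ψ z = g ^ round (re z)` turns them back into `x₁ * x₂` and `x₁ * x₂⁻¹`. -/

open Complex

theorem Complex.log_exp_intCast (k : ℤ) : log (exp k) = k :=
  log_exp (by simpa using Real.pi_pos) (by simpa using Real.pi_pos.le)

theorem IsCyclic.exists_log_embedding_mul_div (G : Type*) [Group G] [IsCyclic G] :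
    ∃ (ρ : G → ℂ) (ψ : ℂ → G), (∀ x, ρ x ≠ 0) ∧ ∀ x₁ x₂ : G,
      ψ (log (ρ x₁) + log (ρ x₂)) = x₁ * x₂ ∧ ψ (log (ρ x₁) - log (ρ x₂)) = x₁ * x₂⁻¹ := by
  obtain ⟨g, hg⟩ := IsCyclic.exists_generator (α := G)
  choose k hk using fun x => Subgroup.mem_zpowers_iff.mp (hg x)
  refine ⟨fun x => exp (k x), fun z => g ^ round z.re, fun x => exp_ne_zero _, fun x₁ x₂ => ?_⟩
  simp only [log_exp_intCast, ← Int.cast_add, ← Int.cast_sub, intCast_re, round_intCast,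
    zpow_add, zpow_sub, hk, and_self]

/-- A single embedding `log ∘ ρ` and outer function `ψ` simultaneously give KA
representations of multiplication mod `p` (via sums of embeddings) and of
division mod `p` (via differences of embeddings) on `(ℤ/pℤ)ˣ`. -/
theorem ka_representation_modular_mul_and_div (p : ℕ) (hp : p.Prime) :
    ∃ (ρ : (ZMod p)ˣ → ℂ) (ψ : ℂ → (ZMod p)ˣ),
      (∀ x : (ZMod p)ˣ, ρ x ≠ 0) ∧
      ∀ x₁ x₂ : (ZMod p)ˣ,
        ψ (Complex.log (ρ x₁) + Complex.log (ρ x₂)) = x₁ * x₂ ∧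
        ψ (Complex.log (ρ x₁) - Complex.log (ρ x₂)) = x₁ * x₂⁻¹ := by
  have : Fact p.Prime := ⟨hp⟩
  exact IsCyclic.exists_log_embedding_mul_div (ZMod p)ˣ
end
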